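/- Let K be a compact convex set in ℂⁿ with the Euclidean Kähler form ω₀, and let g_k be a Kähler metric on a neighborhood of K with Kähler form ω_k. Then ∫_{K × K} (length_{g_k}([x₁, x₂]))² dμ(x₁) dμ(x₂) ≤ 2^{2n} · diam_{g₀}(K)² · Vol_{g₀}(K) · ∫_K ω_k ∧ ω₀^{n−1}, where [x₁, x₂] is the straight segment joining x₁, x₂, dμ is Lebesgue measure, and g₀ the Euclidean metric. -/

import Mathlib

open MeasureTheory Metric Set
open scoped ENNReal

noncomputable section

instance (n : ℕ) : MeasurableSpace (EuclideanSpace ℂ (Fin n)) :=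
  MeasurableSpace.comap (WithLp.ofLp (p := 2)) MeasurableSpace.pi

/-- Lebesgue measure on `ℂⁿ = EuclideanSpace ℂ (Fin n)`, transported from the
product Lebesgue measure. -/
noncomputable def lebC (n : ℕ) : Measure (EuclideanSpace ℂ (Fin n)) :=
  Measure.map (fun z : Fin n → ℂ => (WithLp.equiv 2 (Fin n → ℂ)).symm z) volume

/-- The squared `g_k`-length of a vector `v` at `z`, for the Hermitian metric
`g_k` given by the positive-semidefinite Hermitian operator field `A`. -/
noncomputable def herm (n : ℕ)
    (A : EuclideanSpace ℂ (Fin n) → EuclideanSpace ℂ (Fin n) →L[ℂ] EuclideanSpace ℂ (Fin n))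
    (z v : EuclideanSpace ℂ (Fin n)) : ℝ :=
  (inner ℂ (A z v) v : ℂ).re

/-- The trace `tr_{g₀}(g_k)` of the Hermitian metric given by `A` with respect to
the Euclidean metric. -/
noncomputable def trH (n : ℕ)
    (A : EuclideanSpace ℂ (Fin n) → EuclideanSpace ℂ (Fin n) →L[ℂ] EuclideanSpace ℂ (Fin n))
    (z : EuclideanSpace ℂ (Fin n)) : ℝ :=
  ∑ j, herm n A z (EuclideanSpace.single j (1 : ℂ))

/-- The `g_k`-length of the straight segment `[x,y]`. -/
noncomputable def segLen (n : ℕ)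
    (A : EuclideanSpace ℂ (Fin n) → EuclideanSpace ℂ (Fin n) →L[ℂ] EuclideanSpace ℂ (Fin n))
    (x y : EuclideanSpace ℂ (Fin n)) : ℝ :=
  ∫ t in (0:ℝ)..1, Real.sqrt (herm n A ((1 - t) • x + t • y) (y - x))


/-!
For `v ∈ ℂⁿ`, `g_k(v, v) ≤ tr_{g₀}(g_k) · |v|²`: extend `v / |v|` to an orthonormal basis and
use that the trace is a sum of nonnegative diagonal entries in any orthonormal basis.
Cauchy–Schwarz on `[0, 1]` then bounds `length_{g_k}([x, y])²` by
`diam(K)² · ∫₀¹ tr_{g₀}(g_k)((1 - t) x + t y) dt`, where by convexity the segment stays in `K`,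
so the trace may be extended by zero outside `K`. After Fubini, for fixed `t ≥ 1/2` the
substitution `z = (1 - t) x + t y` in the `y`-integral has Jacobian `t^{-2n} ≤ 2^{2n}`; for
`t ≤ 1/2` substitute in the `x`-integral instead.
-/

open scoped InnerProductSpace
open Module RCLike

section PositiveOperator

variable {𝕜 E : Type*} [RCLike 𝕜] [NormedAddCommGroup E] [InnerProductSpace 𝕜 E]
  [FiniteDimensional 𝕜 E]

theorem LinearMap.IsPositive.re_inner_le_re_trace {T : E →ₗ[𝕜] E} (hT : T.IsPositive) {u : E}
    (hu : ‖u‖ = 1) : re ⟪T u, u⟫_𝕜 ≤ re (T.trace 𝕜 E) := by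
  classical
  have hone : Orthonormal 𝕜 ((↑) : ({u} : Set E) → E) := by
    rw [orthonormal_subtype_iff_ite]
    rintro v rfl w rfl
    simp [inner_self_eq_norm_sq_to_K, hu]
  obtain ⟨w, b, huw, hb⟩ := hone.exists_orthonormalBasis_extension
  have hu_mem : u ∈ w := huw rfl
  rw [T.trace_eq_sum_inner b, map_sum, ← inner_re_symm]
  calc re ⟪u, T u⟫_𝕜 = re ⟪b ⟨u, hu_mem⟩, T (b ⟨u, hu_mem⟩)⟫_𝕜 := by rw [hb]
    _ ≤ ∑ i, re ⟪b i, T (b i)⟫_𝕜 :=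
      Finset.single_le_sum (fun i _ => hT.re_inner_nonneg_right (b i)) (Finset.mem_univ _)

theorem LinearMap.IsPositive.re_inner_le_re_trace_mul_norm_sq {T : E →ₗ[𝕜] E}
    (hT : T.IsPositive) (v : E) : re ⟪T v, v⟫_𝕜 ≤ re (T.trace 𝕜 E) * ‖v‖ ^ 2 := by
  rcases eq_or_ne v 0 with rfl | hv
  · simp
  set u := (‖v‖⁻¹ : 𝕜) • v
  have hvu : v = (‖v‖ : 𝕜) • u := by
    rw [smul_smul, mul_inv_cancel₀ (ofReal_ne_zero.2 (norm_ne_zero_iff.2 hv)), one_smul]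
  have hu : ‖u‖ = 1 := norm_smul_inv_norm hv
  calc re ⟪T v, v⟫_𝕜 = re ⟪T u, u⟫_𝕜 * ‖v‖ ^ 2 := by
        rw [hvu, map_smul, inner_smul_left, inner_smul_right, conj_ofReal, ← mul_assoc,
          ← ofReal_mul, re_ofReal_mul, norm_smul, hu]
        simp only [norm_algebraMap', norm_norm, mul_one]
        ring
    _ ≤ re (T.trace 𝕜 E) * ‖v‖ ^ 2 :=
        mul_le_mul_of_nonneg_right (hT.re_inner_le_re_trace hu) (by positivity)

end PositiveOperator

theorem ContinuousLinearMap.isPositive_of_im_inner_eq_zero {V : Type*} [NormedAddCommGroup V]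
    [InnerProductSpace ℂ V] {T : V →L[ℂ] V} (him : ∀ v, (⟪T v, v⟫_ℂ).im = 0)
    (hre : ∀ v, 0 ≤ (⟪T v, v⟫_ℂ).re) : T.IsPositive :=
  ⟨(LinearMap.isSymmetric_iff_inner_map_self_real _).2 fun v => Complex.conj_eq_iff_im.2 (him v),
    hre⟩

theorem sq_integral_le_integral_sq {α : Type*} [MeasurableSpace α] (P : Measure α)
    [IsProbabilityMeasure P] {f : α → ℝ} (hf : MemLp f 2 P) :
    (∫ a, f a ∂P) ^ 2 ≤ ∫ a, f a ^ 2 ∂P := by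
  have h := ProbabilityTheory.variance_nonneg f P
  rw [ProbabilityTheory.variance_eq_sub hf] at h
  simpa [sub_nonneg] using h

theorem sq_intervalIntegral_sqrt_le {g : ℝ → ℝ} (hg : ContinuousOn g (Icc 0 1))
    (hg0 : ∀ t ∈ Icc (0:ℝ) 1, 0 ≤ g t) :
    (∫ t in (0:ℝ)..1, √(g t)) ^ 2 ≤ ∫ t in (0:ℝ)..1, g t := by
  have : IsProbabilityMeasure (volume.restrict (Ioc (0:ℝ) 1)) := ⟨by simp⟩
  have hsq : EqOn (fun t => √(g t) ^ 2) g (Ioc 0 1) := fun t ht =>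
    Real.sq_sqrt (hg0 t (Ioc_subset_Icc_self ht))
  have hmem : MemLp (fun t => √(g t)) 2 (volume.restrict (Ioc 0 1)) := by
    rw [memLp_two_iff_integrable_sq
      ((hg.sqrt.mono Ioc_subset_Icc_self).aestronglyMeasurable measurableSet_Ioc)]
    exact (hg.integrableOn_Icc.mono_set Ioc_subset_Icc_self).congr_fun hsq.symm measurableSet_Ioc
  simp only [intervalIntegral.integral_of_le zero_le_one]
  calc _ ≤ ∫ t in Ioc 0 1, √(g t) ^ 2 := sq_integral_le_integral_sq _ hmem
    _ = _ := setIntegral_congr_fun measurableSet_Ioc hsq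

section HermitianMetric

variable {n : ℕ}
  {A : EuclideanSpace ℂ (Fin n) → EuclideanSpace ℂ (Fin n) →L[ℂ] EuclideanSpace ℂ (Fin n)}

theorem trH_eq_re_trace (z : EuclideanSpace ℂ (Fin n)) :
    trH n A z = (LinearMap.trace ℂ _ (A z : EuclideanSpace ℂ (Fin n) →ₗ[ℂ] _)).re := by
  rw [LinearMap.trace_eq_sum_inner _ (EuclideanSpace.basisFun (Fin n) ℂ), Complex.re_sum, trH]
  refine Finset.sum_congr rfl fun j _ => ?_
  rw [herm, EuclideanSpace.basisFun_apply, ← inner_conj_symm, Complex.conj_re]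
  rfl

theorem trH_nonneg {z : EuclideanSpace ℂ (Fin n)} (hA : (A z).IsPositive) : 0 ≤ trH n A z :=
  Finset.sum_nonneg fun _ _ => hA.re_inner_nonneg_left _

theorem herm_le_trH_mul_norm_sq {z : EuclideanSpace ℂ (Fin n)} (hA : (A z).IsPositive)
    (v : EuclideanSpace ℂ (Fin n)) : herm n A z v ≤ trH n A z * ‖v‖ ^ 2 := by
  rw [trH_eq_re_trace]
  exact hA.toLinearMap.re_inner_le_re_trace_mul_norm_sq v

theorem ContinuousOn.herm {s : Set (EuclideanSpace ℂ (Fin n))} (hA : ContinuousOn A s)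
    (v : EuclideanSpace ℂ (Fin n)) : ContinuousOn (fun z => herm n A z v) s :=
  Complex.continuous_re.comp_continuousOn
    ((hA.clm_apply continuousOn_const).inner continuousOn_const)

theorem ContinuousOn.trH {s : Set (EuclideanSpace ℂ (Fin n))} (hA : ContinuousOn A s) :
    ContinuousOn (trH n A) s :=
  continuousOn_finsetSum _ fun _ _ => hA.herm _

theorem segLen_sq_le {K : Set (EuclideanSpace ℂ (Fin n))} (hconv : Convex ℝ K)
    (hAc : ContinuousOn A K) (hA : ∀ z ∈ K, (A z).IsPositive) {x y : EuclideanSpace ℂ (Fin n)}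
    (hx : x ∈ K) (hy : y ∈ K) {D : ℝ} (hD : ‖y - x‖ ≤ D) :
    segLen n A x y ^ 2 ≤ ∫ t in (0:ℝ)..1, D ^ 2 * trH n A ((1 - t) • x + t • y) := by
  have hseg : MapsTo (fun t : ℝ => (1 - t) • x + t • y) (Icc 0 1) K := fun t ht =>
    hconv hx hy (by linarith [ht.2]) ht.1 (by ring)
  have hcont : Continuous (fun t : ℝ => (1 - t) • x + t • y) := by fun_prop
  have hherm := (hAc.herm (y - x)).comp hcont.continuousOn hseg
  have htr := hAc.trH.comp hcont.continuousOn hseg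
  calc segLen n A x y ^ 2 ≤ ∫ t in (0:ℝ)..1, herm n A ((1 - t) • x + t • y) (y - x) :=
        sq_intervalIntegral_sqrt_le hherm fun t ht => (hA _ (hseg ht)).re_inner_nonneg_left _
    _ ≤ ∫ t in (0:ℝ)..1, D ^ 2 * trH n A ((1 - t) • x + t • y) := by
        refine intervalIntegral.integral_mono_on zero_le_one
          (hherm.intervalIntegrable_of_Icc zero_le_one)
          ((continuousOn_const.mul htr).intervalIntegrable_of_Icc zero_le_one) fun t ht => ?_
        calc herm n A ((1 - t) • x + t • y) (y - x)
            ≤ trH n A ((1 - t) • x + t • y) * ‖y - x‖ ^ 2 :=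
              herm_le_trH_mul_norm_sq (hA _ (hseg ht)) _
          _ ≤ D ^ 2 * trH n A ((1 - t) • x + t • y) := by
              rw [mul_comm]
              gcongr
              exact trH_nonneg (hA _ (hseg ht))

end HermitianMetric

theorem setIntegral_le_mul_measureReal {X : Type*} [MeasurableSpace X] {μ : Measure X}
    {s : Set X} (hs : μ s < ⊤) {f : X → ℝ} {C : ℝ} (hf0 : ∀ x ∈ s, 0 ≤ f x)
    (hfC : ∀ x ∈ s, f x ≤ C) :
    ∫ x in s, f x ∂μ ≤ C * μ.real s :=
  (Real.le_norm_self _).trans <| norm_setIntegral_le_of_norm_le_const hs fun x hx => by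
    rw [Real.norm_of_nonneg (hf0 x hx)]; exact hfC x hx

theorem integrable_comp_of_nonneg_of_le {X Y : Type*} [MeasurableSpace X] [MeasurableSpace Y]
    (ν : Measure X) [IsFiniteMeasure ν] {F : Y → ℝ} {C : ℝ} (hFm : Measurable F)
    (hF0 : ∀ z, 0 ≤ F z) (hFC : ∀ z, F z ≤ C) {g : X → Y} (hg : Measurable g) :
    Integrable (fun x => F (g x)) ν :=
  .of_bound (hFm.comp hg).aestronglyMeasurable C <| Filter.Eventually.of_forall fun x => by
    rw [Real.norm_of_nonneg (hF0 _)]; exact hFC _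

theorem integral_integral_mono_of_nonneg {α β : Type*} [MeasurableSpace α] [MeasurableSpace β]
    {μ : Measure α} {ν : Measure β} [SFinite μ] [SFinite ν] {f g : α → β → ℝ}
    (hf0 : ∀ x y, 0 ≤ f x y) (hg : Integrable (Function.uncurry g) (μ.prod ν))
    (hfg : ∀ᵐ x ∂μ, ∀ᵐ y ∂ν, f x y ≤ g x y) :
    ∫ x, ∫ y, f x y ∂ν ∂μ ≤ ∫ x, ∫ y, g x y ∂ν ∂μ := by
  refine integral_mono_of_nonneg (Filter.Eventually.of_forall fun x => integral_nonneg (hf0 x))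
    hg.integral_prod_left ?_
  filter_upwards [hg.prod_right_ae, hfg] with x hgx hfgx
  exact integral_mono_of_nonneg (Filter.Eventually.of_forall (hf0 x)) hgx hfgx

section SegmentAverage

variable {E : Type*} [NormedAddCommGroup E] [NormedSpace ℝ E] [FiniteDimensional ℝ E]
  [MeasurableSpace E] [BorelSpace E]

theorem setIntegral_comp_add_smul_le (μ : Measure E) [μ.IsAddHaarMeasure] {f : E → ℝ}
    (hf : Integrable f μ) (hf0 : ∀ z, 0 ≤ f z) (K : Set E) (c : E) {s : ℝ} (hs : 1 / 2 ≤ s) :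
    ∫ y in K, f (c + s • y) ∂μ ≤ 2 ^ finrank ℝ E * ∫ z, f z ∂μ := by
  have hs0 : 0 < s := by linarith
  have hcomp : Integrable (fun y => f (c + s • y)) μ :=
    (integrable_comp_smul_iff μ (fun w => f (c + w)) hs0.ne').2 (hf.comp_add_left c)
  calc ∫ y in K, f (c + s • y) ∂μ ≤ ∫ y, f (c + s • y) ∂μ :=
        setIntegral_le_integral hcomp (Filter.Eventually.of_forall fun y => hf0 _)
    _ = (s ^ finrank ℝ E)⁻¹ * ∫ z, f z ∂μ := by
        rw [Measure.integral_comp_smul μ (fun w => f (c + w)), integral_add_left_eq_self,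
          smul_eq_mul, abs_of_pos (by positivity)]
    _ ≤ ((1 / 2) ^ finrank ℝ E)⁻¹ * ∫ z, f z ∂μ := by
        gcongr
        exact integral_nonneg hf0
    _ = 2 ^ finrank ℝ E * ∫ z, f z ∂μ := by simp

variable {μ : Measure E} {K : Set E} {F : E → ℝ} {C : ℝ}

theorem setIntegral_setIntegral_comp_combo_le_of_half_le [μ.IsAddHaarMeasure] (hK : μ K < ⊤)
    (hFi : Integrable F μ) (hF0 : ∀ z, 0 ≤ F z) {t : ℝ} (ht : 1 / 2 ≤ t) :
    ∫ x in K, ∫ y in K, F ((1 - t) • x + t • y) ∂μ ∂μ ≤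
      2 ^ finrank ℝ E * μ.real K * ∫ z, F z ∂μ := by
  rw [mul_right_comm]
  exact setIntegral_le_mul_measureReal hK (fun x _ => integral_nonneg fun y => hF0 _)
    fun x _ => setIntegral_comp_add_smul_le μ hFi hF0 K _ ht

theorem setIntegral_setIntegral_comp_combo_le [μ.IsAddHaarMeasure] (hK : μ K < ⊤)
    (hFm : Measurable F) (hF0 : ∀ z, 0 ≤ F z) (hFC : ∀ z, F z ≤ C) (hFi : Integrable F μ) (t : ℝ) :
    ∫ x in K, ∫ y in K, F ((1 - t) • x + t • y) ∂μ ∂μ ≤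
      2 ^ finrank ℝ E * μ.real K * ∫ z, F z ∂μ := by
  rcases le_total (1 / 2) t with h | h
  · exact setIntegral_setIntegral_comp_combo_le_of_half_le hK hFi hF0 h
  have : IsFiniteMeasure (μ.restrict K) := isFiniteMeasure_restrict.2 hK.ne
  rw [integral_integral_swap (integrable_comp_of_nonneg_of_le _ hFm hF0 hFC (by fun_prop))]
  simpa only [sub_sub_cancel, add_comm] using
    setIntegral_setIntegral_comp_combo_le_of_half_le hK hFi hF0 (t := 1 - t) (by linarith)

theorem integrable_intervalIntegral_comp_combo (hK : μ K < ⊤) (hFm : Measurable F)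
    (hF0 : ∀ z, 0 ≤ F z) (hFC : ∀ z, F z ≤ C) :
    Integrable (fun p : E × E => ∫ t in (0:ℝ)..1, F ((1 - t) • p.1 + t • p.2))
      ((μ.restrict K).prod (μ.restrict K)) := by
  have : IsFiniteMeasure (μ.restrict K) := isFiniteMeasure_restrict.2 hK.ne
  simp only [intervalIntegral.integral_of_le zero_le_one]
  exact (integrable_comp_of_nonneg_of_le
    (((μ.restrict K).prod (μ.restrict K)).prod (volume.restrict (Ioc (0:ℝ) 1))) hFm hF0 hFC
    (g := fun q => (1 - q.2) • q.1.1 + q.2 • q.1.2) (by fun_prop)).integral_prod_left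

theorem setIntegral_setIntegral_intervalIntegral_comp_combo_le [μ.IsAddHaarMeasure]
    (hK : μ K < ⊤) (hFm : Measurable F) (hF0 : ∀ z, 0 ≤ F z) (hFC : ∀ z, F z ≤ C)
    (hFi : Integrable F μ) :
    ∫ x in K, ∫ y in K, (∫ t in (0:ℝ)..1, F ((1 - t) • x + t • y)) ∂μ ∂μ ≤
      2 ^ finrank ℝ E * μ.real K * ∫ z, F z ∂μ := by
  have : IsFiniteMeasure (μ.restrict K) := isFiniteMeasure_restrict.2 hK.ne
  have hH : Integrable (fun q : (E × E) × ℝ => F ((1 - q.2) • q.1.1 + q.2 • q.1.2))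
      (((μ.restrict K).prod (μ.restrict K)).prod (volume.restrict (Ioc (0:ℝ) 1))) :=
    integrable_comp_of_nonneg_of_le _ hFm hF0 hFC (by fun_prop)
  simp only [intervalIntegral.integral_of_le zero_le_one]
  calc ∫ x in K, ∫ y in K, (∫ t in Ioc (0:ℝ) 1, F ((1 - t) • x + t • y)) ∂μ ∂μ
      = ∫ p : E × E, (∫ t in Ioc (0:ℝ) 1, F ((1 - t) • p.1 + t • p.2))
          ∂((μ.restrict K).prod (μ.restrict K)) :=
        (integral_prod _ hH.integral_prod_left).symm
    _ = ∫ t in Ioc (0:ℝ) 1, ∫ p : E × E, F ((1 - t) • p.1 + t • p.2)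
          ∂((μ.restrict K).prod (μ.restrict K)) :=
        integral_integral_swap hH
    _ = ∫ t in Ioc (0:ℝ) 1, ∫ x in K, ∫ y in K, F ((1 - t) • x + t • y) ∂μ ∂μ := by
        refine integral_congr_ae (Filter.Eventually.of_forall fun t => ?_)
        exact integral_prod _ (integrable_comp_of_nonneg_of_le _ hFm hF0 hFC (by fun_prop))
    _ ≤ 2 ^ finrank ℝ E * μ.real K * (∫ z, F z ∂μ) * volume.real (Ioc (0:ℝ) 1) :=
        setIntegral_le_mul_measureReal measure_Ioc_lt_top
          (fun t _ => integral_nonneg fun x => integral_nonneg fun y => hF0 _)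
          fun t _ => setIntegral_setIntegral_comp_combo_le hK hFm hF0 hFC hFi t
    _ = 2 ^ finrank ℝ E * μ.real K * ∫ z, F z ∂μ := by simp

theorem Convex.setIntegral_setIntegral_le_of_le_intervalIntegral [μ.IsAddHaarMeasure]
    (hconv : Convex ℝ K) (hK : IsCompact K) {φ : E → ℝ} (hφ : ContinuousOn φ K)
    (hφ0 : ∀ z ∈ K, 0 ≤ φ z) {f : E → E → ℝ} (hf0 : ∀ x y, 0 ≤ f x y)
    (hf : ∀ x ∈ K, ∀ y ∈ K, f x y ≤ ∫ t in (0:ℝ)..1, φ ((1 - t) • x + t • y)) :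
    ∫ x in K, ∫ y in K, f x y ∂μ ∂μ ≤
      2 ^ finrank ℝ E * μ.real K * ∫ z in K, φ z ∂μ := by
  classical
  set F := K.indicator φ
  obtain ⟨C, hC⟩ := hK.exists_bound_of_continuousOn hφ
  have hF0 : ∀ z, 0 ≤ F z := indicator_nonneg hφ0
  have hFC : ∀ z, F z ≤ max C 0 := fun z => indicator_apply_le'
    (fun hz => ((Real.le_norm_self _).trans (hC z hz)).trans (le_max_left _ _))
    fun _ => le_max_right _ _
  have hFm : Measurable F := hφ.measurable_piecewise continuousOn_const hK.measurableSet
  have hFi : Integrable F μ := (hφ.integrableOn_compact hK).integrable_indicator hK.measurableSet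
  have hfF : ∀ x ∈ K, ∀ y ∈ K, f x y ≤ ∫ t in (0:ℝ)..1, F ((1 - t) • x + t • y) :=
    fun x hx y hy => (hf x hx y hy).trans_eq <|
      intervalIntegral.integral_congr fun t ht => (indicator_of_mem (by
        rw [uIcc_of_le zero_le_one] at ht
        exact hconv hx hy (by linarith [ht.2]) ht.1 (by ring)) _).symm
  calc ∫ x in K, ∫ y in K, f x y ∂μ ∂μ
      ≤ ∫ x in K, ∫ y in K, (∫ t in (0:ℝ)..1, F ((1 - t) • x + t • y)) ∂μ ∂μ :=
        integral_integral_mono_of_nonneg hf0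
          (integrable_intervalIntegral_comp_combo hK.measure_lt_top hFm hF0 hFC)
          (ae_restrict_of_forall_mem hK.measurableSet fun x hx =>
            ae_restrict_of_forall_mem hK.measurableSet (hfF x hx))
    _ ≤ 2 ^ finrank ℝ E * μ.real K * ∫ z, F z ∂μ :=
        setIntegral_setIntegral_intervalIntegral_comp_combo_le hK.measure_lt_top hFm hF0 hFC hFi
    _ = 2 ^ finrank ℝ E * μ.real K * ∫ z in K, φ z ∂μ := by
        rw [integral_indicator hK.measurableSet]

end SegmentAverage

instance lebC.isAddHaarMeasure (n : ℕ) : (lebC n).IsAddHaarMeasure :=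
  (PiLp.continuousLinearEquiv 2 ℂ (fun _ : Fin n => ℂ)).symm.isAddHaarMeasure_map volume

theorem finrank_real_euclideanSpace_complex (n : ℕ) :
    Module.finrank ℝ (EuclideanSpace ℂ (Fin n)) = 2 * n := by
  rw [← Module.finrank_mul_finrank ℝ ℂ, Complex.finrank_real_complex, finrank_euclideanSpace,
    Fintype.card_fin]

theorem stmt18_general (n : ℕ)
    (K : Set (EuclideanSpace ℂ (Fin n))) (hK : IsCompact K) (hconv : Convex ℝ K)
    (U : Set (EuclideanSpace ℂ (Fin n))) (hKU : K ⊆ U)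
    (A : EuclideanSpace ℂ (Fin n) → EuclideanSpace ℂ (Fin n) →L[ℂ] EuclideanSpace ℂ (Fin n))
    (hAc : ContinuousOn A U)
    (hAherm : ∀ z ∈ U, ∀ v, ((inner ℂ (A z v) v : ℂ)).im = 0)
    (hApos : ∀ z ∈ U, ∀ v, 0 ≤ ((inner ℂ (A z v) v : ℂ)).re) :
    (∫ x in K, ∫ y in K, (segLen n A x y) ^ 2 ∂(lebC n) ∂(lebC n)) ≤
      2 ^ (2 * n) * (diam K) ^ 2 * ((lebC n) K).toReal *
        ((n - 1).factorial * ∫ z in K, trH n A z ∂(lebC n)) := by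
  have hAK : ContinuousOn A K := hAc.mono hKU
  have hA : ∀ z ∈ K, (A z).IsPositive := fun z hz =>
    ContinuousLinearMap.isPositive_of_im_inner_eq_zero (hAherm z (hKU hz)) (hApos z (hKU hz))
  have hseg : ∀ x ∈ K, ∀ y ∈ K, segLen n A x y ^ 2 ≤
      ∫ t in (0:ℝ)..1, diam K ^ 2 * trH n A ((1 - t) • x + t • y) := fun x hx y hy =>
    segLen_sq_le hconv hAK hA hx hy (dist_eq_norm y x ▸ dist_le_diam_of_mem hK.isBounded hy hx)
  have hdouble := hconv.setIntegral_setIntegral_le_of_le_intervalIntegral (μ := lebC n)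
    (φ := fun z => diam K ^ 2 * trH n A z) hK
    (continuousOn_const.mul hAK.trH) (fun z hz => mul_nonneg (sq_nonneg _) (trH_nonneg (hA z hz)))
    (fun _ _ => sq_nonneg _) hseg
  rw [finrank_real_euclideanSpace_complex, integral_const_mul, measureReal_def] at hdouble
  have hfact : (1 : ℝ) ≤ (n - 1).factorial := Nat.one_le_cast.2 (Nat.factorial_pos _)
  have htr : 0 ≤ ∫ z in K, trH n A z ∂(lebC n) :=
    setIntegral_nonneg hK.measurableSet fun z hz => trH_nonneg (hA z hz)
  calc _ ≤ _ := hdouble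
    _ = 2 ^ (2 * n) * diam K ^ 2 * ((lebC n) K).toReal *
          (1 * ∫ z in K, trH n A z ∂(lebC n)) := by ring
    _ ≤ _ := by gcongr

/-- The Demailly–Peternell–Schneider segment-length estimate: for a compact
convex `K ⊆ ℂⁿ` and a Kähler metric `g_k` (given by a continuous
positive-semidefinite Hermitian operator field `A`, with Kähler form `ω_k`) on a
neighborhood of `K`,
`∫_{K×K} length_{g_k}([x₁,x₂])² dμ dμ ≤ 2^{2n}·diam_{g₀}(K)²·Vol_{g₀}(K)·∫_K ω_k ∧ ω₀^{n−1}`,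
where `∫_K ω_k ∧ ω₀^{n-1} = (n−1)!·∫_K tr_{g₀}(g_k) dμ`. -/
theorem stmt18 (n : ℕ) (hn : 1 ≤ n)
    (K : Set (EuclideanSpace ℂ (Fin n))) (hK : IsCompact K) (hconv : Convex ℝ K)
    (U : Set (EuclideanSpace ℂ (Fin n))) (hU : IsOpen U) (hKU : K ⊆ U)
    (A : EuclideanSpace ℂ (Fin n) → EuclideanSpace ℂ (Fin n) →L[ℂ] EuclideanSpace ℂ (Fin n))
    (hAc : ContinuousOn A U)
    (hAherm : ∀ z ∈ U, ∀ v, ((inner ℂ (A z v) v : ℂ)).im = 0)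
    (hApos : ∀ z ∈ U, ∀ v, 0 ≤ ((inner ℂ (A z v) v : ℂ)).re) :
    (∫ x in K, ∫ y in K, (segLen n A x y) ^ 2 ∂(lebC n) ∂(lebC n)) ≤
      2 ^ (2 * n) * (diam K) ^ 2 * ((lebC n) K).toReal *
        ((n - 1).factorial * ∫ z in K, trH n A z ∂(lebC n)) :=
  stmt18_general n K hK hconv U hKU A hAc hAherm hApos
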